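/- arXiv:hep-th/0008024 — 4 statements merged into one kernel-verified Lean document; each statement's English description precedes it below -/
import Mathlib

section
/- Let P̂(p) be a q×q real symmetric matrix of polynomials on ℝ^q, and let F̂ : ℝ^q → ℝ be an irreducible polynomial such that ∑_b P̂_{ab}(p) ∂_b F̂(p) = λ_a(p) F̂(p) for all a and all p ∈ ℝ^q, for some polynomials λ_a. If the gradient ∂F̂ does not vanish identically on the zero set Z = {p : F̂(p) = 0}, then F̂ divides det P̂ as a polynomial. -/
open MvPolynomial

/-- If an irreducible polynomial `F̂` satisfies the master relation
`∑_b P̂_{ab} ∂_b F̂ = λ_a F̂` for a symmetric matrix of polynomials `P̂`, and the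
gradient of `F̂` does not vanish identically on the zero set of `F̂`, then
`F̂` divides `det P̂`. -/
theorem active_factor (q : ℕ)
    (P : Matrix (Fin q) (Fin q) (MvPolynomial (Fin q) ℝ))
    (hsymm : ∀ a b, P a b = P b a)
    (F : MvPolynomial (Fin q) ℝ) (hirr : Irreducible F)
    (lam : Fin q → MvPolynomial (Fin q) ℝ)
    (hmaster : ∀ a : Fin q, ∑ b : Fin q, P a b * pderiv b F = lam a * F)
    (hgrad : ∃ x : Fin q → ℝ, eval x F = 0 ∧ ∃ a : Fin q, eval x (pderiv a F) ≠ 0) :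
    F ∣ P.det := by
  classical
  set I : Ideal (MvPolynomial (Fin q) ℝ) := Ideal.span {F} with hI
  have hprime : Prime F := hirr.prime
  have hIprime : I.IsPrime := by
    rw [hI, Ideal.span_singleton_prime hprime.ne_zero]; exact hprime
  haveI := hIprime
  haveI : IsDomain (MvPolynomial (Fin q) ℝ ⧸ I) := Ideal.Quotient.isDomain I
  set φ := Ideal.Quotient.mk I
  set M := P.map φ with hM
  set v : Fin q → (MvPolynomial (Fin q) ℝ ⧸ I) := fun b => φ (pderiv b F) with hv
  have hker : M.mulVec v = 0 := by
    funext a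
    have : φ (∑ b : Fin q, P a b * pderiv b F) = 0 := by
      rw [hmaster a, map_mul, Ideal.Quotient.eq_zero_iff_mem.2
        (Ideal.mem_span_singleton_self F), mul_zero]
    simpa [Matrix.mulVec, dotProduct, M, v, map_sum] using this
  have hvne : v ≠ 0 := by
    obtain ⟨x, hx0, a, hxa⟩ := hgrad
    intro h
    have : φ (pderiv a F) = 0 := congrFun h a
    have hdvd : F ∣ pderiv a F := by
      rwa [Ideal.Quotient.eq_zero_iff_mem, hI, Ideal.mem_span_singleton] at this
    obtain ⟨g, hg⟩ := hdvd
    apply hxa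
    rw [hg, map_mul, hx0, zero_mul]
  have hdet : M.det = 0 := by
    rw [← Matrix.exists_mulVec_eq_zero_iff]
    exact ⟨v, hvne, hker⟩
  have : φ P.det = 0 := by have h := RingHom.map_det φ P; rw [RingHom.mapMatrix_apply] at h; rw [h, ← hM]; exact hdet
  rwa [Ideal.Quotient.eq_zero_iff_mem, hI, Ideal.mem_span_singleton] at this
end

section
/- A real symmetric matrix A is positive semidefinite if and only if the determinants of all principal (symmetric) minors of A are nonnegative. -/
/-!
Principal submatrices of a positive semidefinite matrix are positive semidefinite, hence have
nonnegative determinant. Conversely, expanding `det (1 + t • A)` multilinearly in the rows gives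
`∑ s, t ^ #s * det A[s, s]`, which is at least its `s = ∅` term `1` when `t ≥ 0` and all principal
minors are nonnegative. A negative eigenvalue `μ` would make `1 - μ⁻¹ • A` singular with
`-μ⁻¹ > 0`.
-/

open Finset Matrix

namespace Matrix

variable {n R : Type*} [Fintype n] [DecidableEq n]

theorem det_one_add_smul_eq_sum_det_submatrix [CommRing R] (r : R) (M : Matrix n n R) :
    (1 + r • M).det = ∑ s : Finset n, r ^ #s * (M.submatrix (↑) (↑) : Matrix s s R).det := by
  have hrows (s : Finset n) : s.piecewise (r • M).row (1 : Matrix n n R).row =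
      fun i => (if i ∈ s then r else 1) • s.piecewise M.row (1 : Matrix n n R).row i := by
    funext i
    by_cases hi : i ∈ s
    · rw [piecewise_eq_of_mem _ _ _ hi, piecewise_eq_of_mem _ _ _ hi, if_pos hi]
      rfl
    · rw [piecewise_eq_of_notMem _ _ _ hi, piecewise_eq_of_notMem _ _ _ hi, if_neg hi, one_smul]
  rw [add_comm]
  change detRowAlternating ((r • M).row + (1 : Matrix n n R).row) = _
  rw [detRowAlternating.map_add_univ]
  refine sum_congr rfl fun s _ => ?_
  rw [hrows, detRowAlternating.map_smul_univ, prod_ite_mem, univ_inter, prod_const]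
  congr 1
  exact det_piecewise_one_eq_submatrix_det M s

theorem one_le_det_one_add_smul_of_det_submatrix_nonneg
    [CommRing R] [LinearOrder R] [IsStrictOrderedRing R] {M : Matrix n n R}
    (hM : ∀ s : Finset n, 0 ≤ (M.submatrix (↑) (↑) : Matrix s s R).det)
    {t : R} (ht : 0 ≤ t) : 1 ≤ (1 + t • M).det := by
  rw [det_one_add_smul_eq_sum_det_submatrix]
  calc (1 : R) = t ^ #(∅ : Finset n) * (M.submatrix (↑) (↑) : Matrix (∅ : Finset n) _ R).det := by
        simp
    _ ≤ _ := single_le_sum (fun s _ => mul_nonneg (pow_nonneg ht _) (hM s)) (mem_univ ∅)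

theorem det_one_sub_inv_smul_eq_zero_of_mulVec_eq_smul {K : Type*} [Field K]
    {M : Matrix n n K} {μ : K} {v : n → K} (hv : v ≠ 0) (hμ : μ ≠ 0) (h : M *ᵥ v = μ • v) :
    (1 - μ⁻¹ • M).det = 0 :=
  exists_mulVec_eq_zero_iff.mp ⟨v, hv, by
    rw [sub_mulVec, one_mulVec, smul_mulVec, h, smul_smul, inv_mul_cancel₀ hμ, one_smul,
      sub_self]⟩

end Matrix

/-- A real symmetric matrix is positive semidefinite if and only if the
determinants of all its principal (symmetric) minors are nonnegative. -/
theorem posSemidef_iff_principal_minors (n : ℕ)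
    (A : Matrix (Fin n) (Fin n) ℝ) (hA : A.IsSymm) :
    A.PosSemidef ↔
      ∀ s : Finset (Fin n),
        0 ≤ (A.submatrix (fun i : {i // i ∈ s} => (i : Fin n))
              (fun i : {i // i ∈ s} => (i : Fin n))).det := by
  refine ⟨fun hpsd s => (hpsd.submatrix _).det_nonneg, fun hminors => ?_⟩
  have hH : A.IsHermitian := isHermitian_iff_isSymm.mpr hA
  refine hH.posSemidef_iff_eigenvalues_nonneg.mpr fun i => ?_
  by_contra! hneg
  have hsingular : (1 - (hH.eigenvalues i)⁻¹ • A).det = 0 :=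
    det_one_sub_inv_smul_eq_zero_of_mulVec_eq_smul
      ((WithLp.ofLp_eq_zero 2).not.mpr <| hH.eigenvectorBasis.orthonormal.ne_zero i) hneg.ne
      (hH.mulVec_eigenvectorBasis i)
  have hpos : 1 ≤ (1 - (hH.eigenvalues i)⁻¹ • A).det := by
    rw [sub_eq_add_neg, ← neg_smul]
    exact one_le_det_one_add_smul_of_det_submatrix_nonneg hminors
      (neg_nonneg.mpr (inv_nonpos.mpr hneg.le))
  linarith
end

section
/- Let ε₁, ε₂ ∈ {−1, +1} and consider the 3×3 symmetric matrix P̂(p) on ℝ³ with entries P̂₁₁ = d₁² ε₁ p₃^{k−1}, P̂₁₂ = 0, P̂₂₂ = d₂² ε₂ p₃^{k−1}, P̂₁₃ = 2d₁p₁, P̂₂₃ = 2d₂p₂, P̂₃₃ = 4p₃ (with d₁ = d₂ = k ≥ 2). Define Z = {p ∈ ℝ³ : ε₁ p₁² + ε₂ p₂² = p₃^k}. Then the set {p ∈ Z ∩ {p₃ = 1} : P̂(p) ⪰ 0 and rank P̂(p) = 2} is nonempty and connected if and only if ε₁ = ε₂ = 1, in which case it equals the unit circle {p₁² + p₂² =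 1, p₃ = 1}. -/
/-!
At `p₃ = 1` the diagonal entries `k²εᵢ` of a positive semidefinite `P̂(p)` are nonnegative,
which forces `ε₁ = ε₂ = 1`. Conversely, for `ε₁ = ε₂ = 1` and `p₁² + p₂² = 1` the matrix is the
Gram matrix `AᵀA` of `A = [[k, 0, 2p₁], [0, k, 2p₂]]`, hence positive semidefinite of rank
`rank A = 2`. The unit circle is connected, being a continuous image of the unit sphere of `ℂ`.
-/

open Matrix

lemma rank_eq_two_of_scalar_left_block {K : Type*} [Field K] {c : K} (hc : c ≠ 0) (a b : K) :
    !![c, 0, a; 0, c, b].rank = 2 := by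
  have hright : !![c, 0, a; 0, c, b] * !![c⁻¹, 0; 0, c⁻¹; 0, 0] = 1 := by
    ext i j; fin_cases i <;> fin_cases j <;> simp [hc]
  refine le_antisymm (rank_le_height _) ?_
  calc 2 = (1 : Matrix (Fin 2) (Fin 2) K).rank := by simp
    _ ≤ _ := hright ▸ rank_mul_le_left _ _

lemma transpose_mul_self_eq_of_sq_add_sq_eq_one {R : Type*} [CommRing R] {c a b : R}
    (h : a ^ 2 + b ^ 2 = 1) :
    !![c, 0, 2 * a; 0, c, 2 * b]ᵀ * !![c, 0, 2 * a; 0, c, 2 * b] =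
      !![c ^ 2, 0, 2 * c * a; 0, c ^ 2, 2 * c * b; 2 * c * a, 2 * c * b, 4] := by
  ext i j
  fin_cases i <;> fin_cases j <;> simp [Matrix.mul_apply, Fin.sum_univ_two] <;>
    first | ring1 | linear_combination 4 * h

lemma unitCircle_eq_image_sphere : {p : Fin 3 → ℝ | p 0 ^ 2 + p 1 ^ 2 = 1 ∧ p 2 = 1} =
    (fun z : ℂ => ![z.re, z.im, 1]) '' Metric.sphere 0 1 := by
  ext p
  simp only [Set.mem_ofPred_eq, Set.mem_image, mem_sphere_zero_iff_norm,
    Complex.norm_eq_sqrt_sq_add_sq, Real.sqrt_eq_one]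
  constructor
  · rintro ⟨hp, h2⟩
    exact ⟨⟨p 0, p 1⟩, hp, by ext i; fin_cases i <;> simp [h2]⟩
  · rintro ⟨z, hz, rfl⟩
    simpa using hz

lemma isConnected_unitCircle : IsConnected {p : Fin 3 → ℝ | p 0 ^ 2 + p 1 ^ 2 = 1 ∧ p 2 = 1} := by
  rw [unitCircle_eq_image_sphere]
  refine (isConnected_sphere ?_ 0 zero_le_one).image _ (Continuous.continuousOn ?_)
  · simp [Complex.rank_real_complex]
  · fun_prop

/-- For the 3×3 symmetric matrix of solution S3 with signs `ε₁, ε₂ = ±1`,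
degrees `d₁ = d₂ = k ≥ 2`, on the variety `Z = {ε₁p₁² + ε₂p₂² = p₃^k}`, the set of
points of `Z ∩ {p₃ = 1}` where the matrix is positive semidefinite of rank 2 is
nonempty and connected iff `ε₁ = ε₂ = 1`, in which case it is the unit circle. -/
theorem solution_S3_allowable (ε₁ ε₂ : ℝ) (hε₁ : ε₁ = 1 ∨ ε₁ = -1)
    (hε₂ : ε₂ = 1 ∨ ε₂ = -1) (k : ℕ) (hk : 2 ≤ k) :
    let P : (Fin 3 → ℝ) → Matrix (Fin 3) (Fin 3) ℝ := fun p =>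
      !![(k : ℝ) ^ 2 * ε₁ * (p 2) ^ (k - 1), 0, 2 * (k : ℝ) * p 0;
         0, (k : ℝ) ^ 2 * ε₂ * (p 2) ^ (k - 1), 2 * (k : ℝ) * p 1;
         2 * (k : ℝ) * p 0, 2 * (k : ℝ) * p 1, 4 * p 2]
    let S : Set (Fin 3 → ℝ) := {p | ε₁ * (p 0) ^ 2 + ε₂ * (p 1) ^ 2 = (p 2) ^ k ∧
      p 2 = 1 ∧ (P p).PosSemidef ∧ (P p).rank = 2}
    ((S.Nonempty ∧ IsConnected S) ↔ (ε₁ = 1 ∧ ε₂ = 1)) ∧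
    ((ε₁ = 1 ∧ ε₂ = 1) →
      S = {p : Fin 3 → ℝ | (p 0) ^ 2 + (p 1) ^ 2 = 1 ∧ p 2 = 1}) := by
  intro P S
  have hk0 : (k : ℝ) ≠ 0 := Nat.cast_ne_zero.mpr (by omega)
  have sign_eq_one {ε : ℝ} (hε : ε = 1 ∨ ε = -1) (h : 0 ≤ (k : ℝ) ^ 2 * ε) : ε = 1 :=
    hε.resolve_right fun h' => by subst h'; nlinarith [sq_pos_of_ne_zero hk0]
  have hsigns : S.Nonempty → ε₁ = 1 ∧ ε₂ = 1 := by
    rintro ⟨p, -, h2, hpsd, -⟩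
    have h00 := hpsd.diag_nonneg (i := 0)
    have h11 := hpsd.diag_nonneg (i := 1)
    simp only [P, h2] at h00 h11
    exact ⟨sign_eq_one hε₁ (by simpa using h00), sign_eq_one hε₂ (by simpa using h11)⟩
  have hcircle : ε₁ = 1 ∧ ε₂ = 1 → S = {p | p 0 ^ 2 + p 1 ^ 2 = 1 ∧ p 2 = 1} := by
    rintro ⟨rfl, rfl⟩
    ext p
    constructor
    · rintro ⟨hz, h2, -⟩
      simpa [h2] using And.intro hz h2
    · rintro ⟨hc, h2⟩
      set A : Matrix (Fin 2) (Fin 3) ℝ := !![(k : ℝ), 0, 2 * p 0; 0, k, 2 * p 1]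
      have hP : P p = Aᵀ * A := by
        rw [transpose_mul_self_eq_of_sq_add_sq_eq_one hc]
        simp [P, h2]
      refine ⟨by simpa [h2] using hc, h2, ?_, ?_⟩
      · rw [hP, ← conjTranspose_eq_transpose_of_trivial]
        exact posSemidef_conjTranspose_mul_self A
      · rw [hP, rank_transpose_mul_self]
        exact rank_eq_two_of_scalar_left_block hk0 _ _
  refine ⟨⟨fun h => hsigns h.1, fun h => ?_⟩, hcircle⟩
  rw [hcircle h]
  exact ⟨⟨![1, 0, 1], by simp⟩, isConnected_unitCircle⟩
end

section
/- Let F̂(p₁,p₂,p₃) = p₁² + ε (p₂ − p₃^k)^{2m+1} with ε = ±1, k, m ≥ 1, and let P̂ be the 3×3 symmetric matrix with P̂₁₁ = d₁² ε p₃^{k−1}(p₂ − p₃^k)^{2m}, P̂₁₂ = 0, P̂₂₂ = d₂² p₂ p₃^{k−1}, P̂_{a3} = 2 d_a p_a, P̂₃₃ = 4p₃, where d₁ = k(2m+1), d₂ = 2k. Then the canonical master equation ∑_{b=1}^3 P̂_{ab}(p) ∂_b F̂(p) = 2 δ_{a3} w F̂(p) holds identically for a = 1,2,3, with w = 2k(2m+1).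 -/
open MvPolynomial

/-- For `F̂ = p₁² + ε(p₂ − p₃^k)^{2m+1}` and the matrix `P̂` of the family S1
(degrees `d₁ = k(2m+1)`, `d₂ = 2k`), the canonical master equation
`∑_b P̂_{ab} ∂_b F̂ = 2δ_{a3} w F̂` holds identically, with `w = 2k(2m+1)`. -/
theorem solution_S1_canonical_equation (ε : ℝ) (hε : ε = 1 ∨ ε = -1)
    (k m : ℕ) (hk : 1 ≤ k) (hm : 1 ≤ m) :
    let d₁ : ℕ := k * (2 * m + 1)
    let d₂ : ℕ := 2 * k
    let w : ℕ := 2 * k * (2 * m + 1)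
    let F : MvPolynomial (Fin 3) ℝ :=
      (X 0) ^ 2 + C ε * (X 1 - (X 2) ^ k) ^ (2 * m + 1)
    let P : Matrix (Fin 3) (Fin 3) (MvPolynomial (Fin 3) ℝ) :=
      !![C ((d₁ : ℝ) ^ 2) * C ε * (X 2) ^ (k - 1) * (X 1 - (X 2) ^ k) ^ (2 * m), 0,
           C (2 * (d₁ : ℝ)) * X 0;
         0, C ((d₂ : ℝ) ^ 2) * X 1 * (X 2) ^ (k - 1), C (2 * (d₂ : ℝ)) * X 1;
         C (2 * (d₁ : ℝ)) * X 0, C (2 * (d₂ : ℝ)) * X 1, C 4 * X 2]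
    ∀ a : Fin 3, ∑ b : Fin 3, P a b * pderiv b F =
      (if a = 2 then C (2 * (w : ℝ)) * F else 0) := by
  intro d₁ d₂ w F P a
  obtain ⟨k, rfl⟩ : ∃ k', k = k' + 1 := ⟨k - 1, (Nat.succ_pred_eq_of_pos hk).symm⟩
  simp only [d₁, d₂, w, F, P] at *
  fin_cases a <;>
    simp [Fin.sum_univ_three, Matrix.cons_val_zero, Matrix.cons_val_one, map_add, map_sub,
      Derivation.leibniz, Derivation.leibniz_pow, pderiv_C_mul, pderiv_X, Pi.single_apply,
      Nat.add_sub_cancel, map_ofNat] <;>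
    push_cast <;> ring
end
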